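/- (Extension property for cofibrations of retractive simplicial sets.) Let X be a simplicial set. Suppose given retractive simplicial sets A, B, A', B' over X, maps A ⟶ B and A' ⟶ B' over and under X whose underlying maps are monomorphisms, and maps f_A : A ⟶ A' and f_B : B ⟶ B' over and under X with f_B restricting to f_A. Let C := B ⨿_A X be the pushout of A ⟶ B along the retraction A ⟶ X, and similarly C' := B' ⨿_{A'} X, and let f_C : C ⟶ C' be the induced map. If the underlying maps of f_A and f_C are monomorphisms, then the underlying map of f_B is a monomorphism. -/

import Mathlib

/-!
Pushouts of simplicial sets are computed levelwise, so it suffices to argue with simplices.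
In a pushout of sets `B ⨿_A X`, two distinct elements of `B` can only be identified if both lie
in the image of `A`. So if `f_B b₁ = f_B b₂`, injectivity of `f_C` shows that `b₁` and `b₂` have
the same image in `C`; either `b₁ = b₂`, or `bₖ = i aₖ`, and then
`i' (f_A a₁) = f_B b₁ = f_B b₂ = i' (f_A a₂)` gives `a₁ = a₂` by injectivity of `i'` and `f_A`.
-/

open CategoryTheory CategoryTheory.Limits Simplicial

universe u

/-- A retractive simplicial set over `X`. -/
structure Retr (X : SSet.{u}) where
  Y : SSet.{u}
  r : Y ⟶ X
  s : X ⟶ Y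
  retr : s ≫ r = 𝟙 X

namespace Retr

variable {X X₁ X₂ : SSet.{u}}

/-- The "wedge" `Y₁ ⨯ X₂ ∪_(X₁ ⨯ X₂) X₁ ⨯ Y₂`. -/
noncomputable def wedgeObj (W₁ : Retr X₁) (W₂ : Retr X₂) : SSet.{u} :=
  pushout (prod.map W₁.s (𝟙 X₂)) (prod.map (𝟙 X₁) W₂.s)

/-- The canonical map from the wedge to the product. -/
noncomputable def wedgeToProd (W₁ : Retr X₁) (W₂ : Retr X₂) :
    wedgeObj W₁ W₂ ⟶ W₁.Y ⨯ W₂.Y :=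
  pushout.desc (prod.map (𝟙 W₁.Y) W₂.s) (prod.map W₁.s (𝟙 W₂.Y))
    (by simp [prod.map_map])

/-- The map from the wedge to the base, induced by the retractions. -/
noncomputable def wedgeToBase (W₁ : Retr X₁) (W₂ : Retr X₂) :
    wedgeObj W₁ W₂ ⟶ X₁ ⨯ X₂ :=
  pushout.desc (prod.map W₁.r (𝟙 X₂)) (prod.map (𝟙 X₁) W₂.r)
    (by simp [prod.map_map, W₁.retr, W₂.retr])

/-- The exterior smash product of retractive simplicial sets. -/
noncomputable def esmash (W₁ : Retr X₁) (W₂ : Retr X₂) : Retr (X₁ ⨯ X₂) where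
  Y := pushout (wedgeToBase W₁ W₂) (wedgeToProd W₁ W₂)
  s := pushout.inl _ _
  r := pushout.desc (𝟙 _) (prod.map W₁.r W₂.r) (by
    apply pushout.hom_ext <;>
      simp [wedgeObj, pushout.inl_desc, pushout.inr_desc, pushout.inl_desc_assoc, pushout.inr_desc_assoc, wedgeToBase, wedgeToProd, prod.map_map, W₁.retr, W₂.retr])
  retr := pushout.inl_desc _ _ _

/-- The canonical quotient map `Y₁ ⨯ Y₂ ⟶ Y₁ ⊼ Y₂`. -/
noncomputable def esmashQuot (W₁ : Retr X₁) (W₂ : Retr X₂) :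
    (W₁.Y ⨯ W₂.Y) ⟶ (esmash W₁ W₂).Y :=
  pushout.inr _ _

/-- Pushforward of a retractive simplicial set along a map of base simplicial sets. -/
noncomputable def pushf {X X' : SSet.{u}} (f : X ⟶ X') (W : Retr X) : Retr X' where
  Y := pushout W.s f
  s := pushout.inr _ _
  r := pushout.desc (W.r ≫ f) (𝟙 X') (by
    rw [← Category.assoc, W.retr, Category.id_comp, Category.comp_id])
  retr := by simp [pushout.inr_desc]

/-- The internal smash product over a base with multiplication `μ`. -/
noncomputable def ismash (μ : X ⨯ X ⟶ X) (W₁ W₂ : Retr X) : Retr X :=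
  pushf μ (esmash W₁ W₂)

/-- The canonical quotient map `Y₁ ⨯ Y₂ ⟶ Y₁ ∧ Y₂`. -/
noncomputable def ismashQuot (μ : X ⨯ X ⟶ X) (W₁ W₂ : Retr X) :
    (W₁.Y ⨯ W₂.Y) ⟶ (ismash μ W₁ W₂).Y :=
  esmashQuot W₁ W₂ ≫ pushout.inl (esmash W₁ W₂).s μ

/-- Morphisms of retractive simplicial sets over a fixed base. -/
structure RHom {X : SSet.{u}} (W W' : Retr X) where
  f : W.Y ⟶ W'.Y
  hs : W.s ≫ f = W'.s
  hr : f ≫ W'.r = W.r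

/-- The identity morphism of a retractive simplicial set. -/
def RHom.id (W : Retr X) : RHom W W := ⟨𝟙 _, by simp, by simp⟩

/-- The map induced on wedges by a pair of morphisms of retractive simplicial sets. -/
noncomputable def wedgeMap {W₁ W₁' : Retr X₁} {W₂ W₂' : Retr X₂}
    (φ₁ : RHom W₁ W₁') (φ₂ : RHom W₂ W₂') : wedgeObj W₁ W₂ ⟶ wedgeObj W₁' W₂' :=
  pushout.map _ _ _ _ (prod.map φ₁.f (𝟙 X₂)) (prod.map (𝟙 X₁) φ₂.f) (𝟙 (X₁ ⨯ X₂))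
    (by simp [prod.map_map, φ₁.hs]) (by simp [prod.map_map, φ₂.hs])

/-- The map induced on exterior smash products by a pair of morphisms
of retractive simplicial sets. -/
noncomputable def esmashMap {W₁ W₁' : Retr X₁} {W₂ W₂' : Retr X₂}
    (φ₁ : RHom W₁ W₁') (φ₂ : RHom W₂ W₂') : RHom (esmash W₁ W₂) (esmash W₁' W₂') where
  f := pushout.map _ _ _ _ (𝟙 (X₁ ⨯ X₂)) (prod.map φ₁.f φ₂.f) (wedgeMap φ₁ φ₂)
    (by
      apply pushout.hom_ext <;>
        simp [wedgeObj, pushout.inl_desc, pushout.inr_desc, pushout.inl_desc_assoc, pushout.inr_desc_assoc, wedgeMap, wedgeToBase, prod.map_map, φ₁.hr, φ₂.hr])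
    (by
      apply pushout.hom_ext <;>
        simp [wedgeObj, pushout.inl_desc, pushout.inr_desc, pushout.inl_desc_assoc, pushout.inr_desc_assoc, wedgeMap, wedgeToProd, prod.map_map, φ₁.hs, φ₂.hs])
  hs := by simp [esmash, pushout.map, pushout.inl_desc]
  hr := by
    apply pushout.hom_ext <;>
      simp [esmash, pushout.map, pushout.inl_desc_assoc, pushout.inr_desc_assoc, prod.map_map, φ₁.hr, φ₂.hr]
    · erw [pushout.inl_desc, pushout.inl_desc]
    · erw [pushout.inr_desc, pushout.inr_desc]; simp [prod.map_map, φ₁.hr, φ₂.hr]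

/-- The map induced on pushforwards by a morphism of retractive simplicial sets. -/
noncomputable def pushfMap {X X' : SSet.{u}} (f : X ⟶ X') {W W' : Retr X}
    (φ : RHom W W') : RHom (pushf f W) (pushf f W') where
  f := pushout.map _ _ _ _ φ.f (𝟙 X') (𝟙 X) (by simp [φ.hs]) (by simp)
  hs := by simp [pushf, pushout.map, pushout.inr_desc]
  hr := by
    apply pushout.hom_ext <;> simp [pushf, pushout.map, pushout.inl_desc, pushout.inr_desc, pushout.inl_desc_assoc, pushout.inr_desc_assoc, φ.hr]
    rw [← Category.assoc, φ.hr]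

/-- The map induced on internal smash products by a pair of morphisms. -/
noncomputable def ismashMap (μ : X ⨯ X ⟶ X) {W₁ W₁' W₂ W₂' : Retr X}
    (φ₁ : RHom W₁ W₁') (φ₂ : RHom W₂ W₂') :
    RHom (ismash μ W₁ W₂) (ismash μ W₁' W₂') :=
  pushfMap μ (esmashMap φ₁ φ₂)

/-- The pushout of retractive simplicial sets along a pair of morphisms,
computed on underlying simplicial sets. -/
noncomputable def retrPushout {W₁ W₂ W₀ : Retr X} (u : RHom W₁ W₂) (v : RHom W₁ W₀) :
    Retr X where
  Y := pushout u.f v.f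
  s := W₂.s ≫ pushout.inl _ _
  r := pushout.desc W₂.r W₀.r (by rw [u.hr, v.hr])
  retr := by rw [Category.assoc, pushout.inl_desc, W₂.retr]

/-- The first structure map into the pushout of retractive simplicial sets. -/
noncomputable def pInl {W₁ W₂ W₀ : Retr X} (u : RHom W₁ W₂) (v : RHom W₁ W₀) :
    RHom W₂ (retrPushout u v) where
  f := pushout.inl _ _
  hs := rfl
  hr := by simp [retrPushout, pushout.inl_desc]

/-- The second structure map into the pushout of retractive simplicial sets. -/
noncomputable def pInr {W₁ W₂ W₀ : Retr X} (u : RHom W₁ W₂) (v : RHom W₁ W₀) :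
    RHom W₀ (retrPushout u v) where
  f := pushout.inr _ _
  hs := by
    show W₀.s ≫ _ = W₂.s ≫ _
    rw [← u.hs, ← v.hs]
    erw [Category.assoc, Category.assoc, pushout.condition]; rfl
  hr := by simp [retrPushout, pushout.inr_desc]

/-- The sum of retractive simplicial sets over `X`. -/
noncomputable def retrSum (Y₁ Y₂ : Retr X) : Retr X where
  Y := pushout Y₁.s Y₂.s
  s := Y₁.s ≫ pushout.inl _ _
  r := pushout.desc Y₁.r Y₂.r (by rw [Y₁.retr, Y₂.retr])
  retr := by rw [Category.assoc, pushout.inl_desc, Y₁.retr]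

/-- The first sum inclusion. -/
noncomputable def sumInl (Y₁ Y₂ : Retr X) : RHom Y₁ (retrSum Y₁ Y₂) where
  f := pushout.inl _ _
  hs := rfl
  hr := by simp [retrSum, pushout.inl_desc]

/-- The second sum inclusion. -/
noncomputable def sumInr (Y₁ Y₂ : Retr X) : RHom Y₂ (retrSum Y₁ Y₂) where
  f := pushout.inr _ _
  hs := pushout.condition.symm
  hr := by simp [retrSum, pushout.inr_desc]

end Retr

open Retr

universe v w

namespace CategoryTheory.Limits.Types

variable {S X₁ X₂ : Type u} {f : S ⟶ X₁} {g : S ⟶ X₂}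

lemma Pushout.eq_or_mem_range_of_eqvGen {a b : X₁ ⊕ X₂}
    (h : Relation.EqvGen (Pushout.Rel f g) a b) :
    a = b ∨ (Sum.elim (· ∈ Set.range f) (· ∈ Set.range g) a ∧
      Sum.elim (· ∈ Set.range f) (· ∈ Set.range g) b) := by
  induction h with
  | rel _ _ h => obtain ⟨s⟩ := h; exact Or.inr ⟨⟨s, rfl⟩, ⟨s, rfl⟩⟩
  | refl => exact Or.inl rfl
  | symm _ _ _ ih => exact ih.imp Eq.symm And.symm
  | trans _ _ _ _ _ ih₁ ih₂ =>
    rcases ih₁ with rfl | ⟨ha, hb⟩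
    · exact ih₂
    · rcases ih₂ with rfl | ⟨_, hc⟩
      · exact Or.inr ⟨ha, hb⟩
      · exact Or.inr ⟨ha, hc⟩

lemma eq_or_mem_range_of_pushoutCocone_inl_eq {c : PushoutCocone f g} (hc : IsColimit c)
    {x y : X₁} (h : c.inl x = c.inl y) :
    x = y ∨ (x ∈ Set.range f ∧ y ∈ Set.range f) := by
  let e := hc.coconePointUniqueUpToIso (Pushout.isColimitCocone f g)
  have he (z : X₁) : e.hom (c.inl z) = Pushout.inl f g z :=
    ConcreteCategory.congr_hom
      (hc.comp_coconePointUniqueUpToIso_hom (Pushout.isColimitCocone f g) WalkingSpan.left) z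
  have hrel : Relation.EqvGen (Pushout.Rel f g) (Sum.inl x) (Sum.inl y) :=
    Quot.eqvGen_exact (show Pushout.inl f g x = Pushout.inl f g y by rw [← he, ← he, h])
  simpa using Pushout.eq_or_mem_range_of_eqvGen hrel

lemma injective_of_injective_pushoutCocone_desc {A B A' B' X X' : Type u}
    {i : A ⟶ B} {r : A ⟶ X} {i' : A' ⟶ B'} {r' : A' ⟶ X'} {fA : A ⟶ A'} {fB : B ⟶ B'}
    {c : PushoutCocone i r} (hc : IsColimit c) (c' : PushoutCocone i' r') (fC : c.pt ⟶ c'.pt)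
    (hcompat : i ≫ fB = fA ≫ i') (hC : c.inl ≫ fC = fB ≫ c'.inl)
    (hi' : Function.Injective i') (hfA : Function.Injective fA)
    (hfC : Function.Injective fC) : Function.Injective fB := by
  have hcompat' (a : A) : fB (i a) = i' (fA a) := ConcreteCategory.congr_hom hcompat a
  have hC' (b : B) : fC (c.inl b) = c'.inl (fB b) := ConcreteCategory.congr_hom hC b
  intro x y hxy
  have hinl : c.inl x = c.inl y := hfC (by rw [hC', hC', hxy])
  obtain rfl | ⟨⟨a, rfl⟩, ⟨b, rfl⟩⟩ := eq_or_mem_range_of_pushoutCocone_inl_eq hc hinl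
  · rfl
  · have hab : fA a = fA b := hi' (by rw [← hcompat', ← hcompat', hxy])
    rw [hfA hab]

end CategoryTheory.Limits.Types

lemma CategoryTheory.FunctorToTypes.mono_of_mono_pushout_map {J : Type v} [Category.{w} J]
    {A B A' B' X X' : J ⥤ Type u}
    (i : A ⟶ B) (r : A ⟶ X) (i' : A' ⟶ B') (r' : A' ⟶ X') (fA : A ⟶ A') (fB : B ⟶ B')
    (fX : X ⟶ X') (w₁ : i ≫ fB = fA ≫ i') (w₂ : r ≫ fX = fA ≫ r')
    [Mono i'] [Mono fA] (hfC : Mono (pushout.map i r i' r' fB fX fA w₁ w₂)) : Mono fB := by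
  have hinl : pushout.inl i r ≫ pushout.map i r i' r' fB fX fA w₁ w₂ = fB ≫ pushout.inl i' r' :=
    pushout.inl_desc _ _ _
  refine (NatTrans.mono_iff_mono_app _).2 fun j => (mono_iff_injective _).2 ?_
  exact Types.injective_of_injective_pushoutCocone_desc
    (isColimitOfHasPushoutOfPreservesColimit ((evaluation J (Type u)).obj j) i r)
    (PushoutCocone.mk (g := r'.app j) ((pushout.inl i' r').app j) ((pushout.inr i' r').app j)
      (congr_app (pushout.condition (f := i') (g := r')) j))
    ((pushout.map i r i' r' fB fX fA w₁ w₂).app j)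
    (congr_app w₁ j) (congr_app hinl j)
    ((mono_iff_injective _).1 inferInstance) ((mono_iff_injective _).1 inferInstance)
    ((mono_iff_injective _).1 ((NatTrans.mono_iff_mono_app _).1 hfC j))

/-- **Extension property for cofibrations of retractive simplicial sets.**  Suppose given
retractive simplicial sets `A`, `B`, `A'`, `B'` over `X`, cofibrations `i : A ⟶ B` and
`i' : A' ⟶ B'` over and under `X`, and maps `fA : A ⟶ A'`, `fB : B ⟶ B'` over and under
`X` with `fB` restricting to `fA`.  Let `C := B ⨿_A X` and `C' := B' ⨿_{A'} X` be the
pushouts along the retractions, with induced map `f_C : C ⟶ C'`.  If the underlying maps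
of `fA` and `f_C` are monomorphisms, then so is the underlying map of `fB`. -/
theorem extension_property {X : SSet} {A B A' B' : Retr X}
    (i : RHom A B) (i' : RHom A' B') (fA : RHom A A') (fB : RHom B B')
    (hi' : Mono i'.f)
    (hcompat : i.f ≫ fB.f = fA.f ≫ i'.f)
    (hfA : Mono fA.f)
    (hfC : Mono (pushout.map i.f A.r i'.f A'.r fB.f (𝟙 X) fA.f hcompat
      (by rw [Category.comp_id, fA.hr]))) :
    Mono fB.f :=
  FunctorToTypes.mono_of_mono_pushout_map i.f A.r i'.f A'.r fA.f fB.f (𝟙 X) hcompat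
    (by rw [Category.comp_id, fA.hr]) hfC
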